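/- In the d-dimensional lattice graph, fix t with d−1 ≤ t ≤ dn−1 and p ∈ L_{t+1}, and let M_p = (L_t ∪ K_t) ∩ N(p). If w ∈ ℝ^{M_p} is orthogonal to all restrictions {u|_{M_p} : u ∈ 𝒰^{(t)}}, then w is a scalar multiple of (γ_{pq})_{q ∈ M_p}, i.e., of the restriction of the Laplacian row v_p to M_p. -/

import Mathlib

/-!
Cutting a function off to `C = L_t^S ∪ K_t^{S-}` produces an element of `𝒰^{(t)}` as soon as
the cut-off is harmonic on `L_{t+1}^S`. So `w` vanishes on the kernel of
`v ↦ (Δ_γ (v|_C))|_{L_{t+1}^S}`, and finite-dimensional duality together with the symmetry of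
`Δ_γ` gives `w = Δ_γ Λ` on `C` for some `Λ` supported on `L_{t+1}^S`.

Off `M_p` the equations `(Δ_γ Λ)_x = 0`, `x ∈ C`, are triangular: sweeping `L_{t+1}^S` upwards,
every vertex other than `p` is the last vertex with unknown `Λ` adjacent to some equation
vertex. Hence `Λ` is supported at `p`, and on `M_p` we read off `w_q = Λ_p γ_{pq}`.
-/

noncomputable section
open Classical Finset

namespace DiscreteCalderon

/-- Vertices of the ambient lattice `ℤ^d`. -/
abbrev V (d : ℕ) := Fin d → ℤ

/-- Interior vertex set `D = {x : 1 ≤ x_i ≤ n}`. -/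
def Dset (d n : ℕ) : Set (V d) := {x | ∀ i, 1 ≤ x i ∧ x i ≤ (n : ℤ)}

/-- ℓ¹ distance. -/
def dist1 {d : ℕ} (p q : V d) : ℤ := ∑ i, |p i - q i|

/-- Boundary vertex set `∂D`: vertices at ℓ¹ distance 1 from `D`. -/
def Bset (d n : ℕ) : Set (V d) := {p | p ∉ Dset d n ∧ ∃ q ∈ Dset d n, dist1 p q = 1}

/-- All vertices of the graph, `D ∪ ∂D`. -/
def Vset (d n : ℕ) : Set (V d) := Dset d n ∪ Bset d n

/-- Adjacency of the lattice graph: ℓ¹ distance 1, both endpoints vertices,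
not both on the boundary. -/
def Adj (d n : ℕ) (p q : V d) : Prop :=
  dist1 p q = 1 ∧ p ∈ Vset d n ∧ q ∈ Vset d n ∧ (p ∈ Dset d n ∨ q ∈ Dset d n)

/-- A finite box containing all vertices. -/
def box (d n : ℕ) : Finset (V d) :=
  Fintype.piFinset (fun _ : Fin d => Finset.Icc (0 : ℤ) ((n : ℤ) + 1))

/-- Neighbours of `p` in the graph, as a finite set. -/
def nbr (d n : ℕ) (p : V d) : Finset (V d) := (box d n).filter (fun q => Adj d n p q)

/-- Interior neighbours of `p`. -/
def nbrD (d n : ℕ) (p : V d) : Finset (V d) := (nbr d n p).filter (fun q => q ∈ Dset d n)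

/-- The discrete (weighted) Laplacian `(Δ_γ u)_p = ∑_{q∈N(p)} γ_{qp}(u_q - u_p)`. -/
def lap (d n : ℕ) (γ : V d → V d → ℝ) (u : V d → ℝ) (p : V d) : ℝ :=
  ∑ q ∈ nbr d n p, γ q p * (u q - u p)

/-- The boundary current `(D_γ u)_p = ∑_{q∈N(p)∩D} γ_{pq}(u_q - u_p)`
(there is exactly one interior neighbour of a boundary node). -/
def cur (d n : ℕ) (γ : V d → V d → ℝ) (u : V d → ℝ) (p : V d) : ℝ :=
  ∑ q ∈ nbrD d n p, γ p q * (u q - u p)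

/-- A strictly positive symmetric conductivity. -/
def GoodCond (d n : ℕ) (γ : V d → V d → ℝ) : Prop :=
  (∀ p q, γ p q = γ q p) ∧ ∀ p q, Adj d n p q → 0 < γ p q

/-- The coordinate sum of a lattice point. -/
def sum1 {d : ℕ} (x : V d) : ℤ := ∑ i, x i

/-- Interior diagonal slice `L_t`. -/
def L (d n : ℕ) (t : ℤ) : Set (V d) := {x | x ∈ Dset d n ∧ sum1 x = t}

/-- `L_t^S = ∪_{ℓ ≤ t} L_ℓ`. -/
def LS (d n : ℕ) (t : ℤ) : Set (V d) := {x | x ∈ Dset d n ∧ sum1 x ≤ t}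

/-- Boundary diagonal slice `K_t`. -/
def K (d n : ℕ) (t : ℤ) : Set (V d) := {x | x ∈ Bset d n ∧ sum1 x = t}

/-- `K_t^- = {x ∈ K_t : min_i x_i = 0}`. -/
def Km (d n : ℕ) (t : ℤ) : Set (V d) := {x | x ∈ K d n t ∧ ∃ i, x i = 0}

/-- `K_t^+ = {x ∈ K_t : max_i x_i = n+1}`. -/
def Kp (d n : ℕ) (t : ℤ) : Set (V d) := {x | x ∈ K d n t ∧ ∃ i, x i = (n : ℤ) + 1}

/-- `K_t^{S-} = ∪_{ℓ ≤ t} K_ℓ^-`. -/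
def KSm (d n : ℕ) (t : ℤ) : Set (V d) := {x | x ∈ Bset d n ∧ sum1 x ≤ t ∧ ∃ i, x i = 0}

/-- `K_t^{S+} = ∪_{ℓ ≤ t} K_ℓ^+`. -/
def KSp (d n : ℕ) (t : ℤ) : Set (V d) := {x | x ∈ Bset d n ∧ sum1 x ≤ t ∧ ∃ i, x i = (n : ℤ) + 1}

/-- The lower boundary region `J_t^S = K_t^{S-} ∪ K_{t+1}^{S+}`. -/
def JS (d n : ℕ) (t : ℤ) : Set (V d) := KSm d n t ∪ KSp d n (t + 1)

/-- `J_t = K_t^- ∪ K_{t+1}^+`. -/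
def Jslice (d n : ℕ) (t : ℤ) : Set (V d) := Km d n t ∪ Kp d n (t + 1)

/-- `u` is the γ-harmonic extension of boundary data `φ` (zero-extension convention
outside `D ∪ ∂D`). -/
def IsSol (d n : ℕ) (γ : V d → V d → ℝ) (φ u : V d → ℝ) : Prop :=
  (∀ p, p ∉ Vset d n → u p = 0) ∧
  (∀ p ∈ Dset d n, lap d n γ u p = 0) ∧
  (∀ p ∈ Bset d n, u p = φ p)

/-- The Laplacian row vector `v_p`. -/
def vrow (d n : ℕ) (γ : V d → V d → ℝ) (p : V d) : V d → ℝ := fun q =>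
  if Adj d n p q then γ p q
  else if q = p then -(∑ r ∈ nbr d n p, γ p r) else 0

/-- Restriction of a function to a set (zero outside). -/
def rst {d : ℕ} (S : Set (V d)) (f : V d → ℝ) : V d → ℝ := fun q => if q ∈ S then f q else 0

/-- Euclidean inner product of (vertex-supported) functions. -/
def dot (d n : ℕ) (f g : V d → ℝ) : ℝ := ∑ p ∈ box d n, f p * g p

/-- The localized solution space `𝒰^{(t)}`: restrictions to `L_t^S ∪ J_t^S` of
harmonic extensions of boundary potentials in `ker T₁^{(t)}`. -/
def Uset (d n : ℕ) (γ : V d → V d → ℝ) (t : ℤ) : Set (V d → ℝ) :=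
  {u | (∀ p, p ∉ LS d n t ∪ JS d n t → u p = 0) ∧
    ∃ φ w : V d → ℝ, (∀ p, p ∉ JS d n t → φ p = 0) ∧ IsSol d n γ φ w ∧
      (∀ p ∈ L d n (t + 1), w p = 0) ∧ ∀ p ∈ LS d n t ∪ JS d n t, u p = w p}

/-- The set `E_t` of edges between the consecutive layers:
`E(K_t^-, L_{t+1}) ∪ E(L_t, K_{t+1}^+) ∪ E(L_t, L_{t+1})`. -/
def EdgeT (d n : ℕ) (t : ℤ) (p q : V d) : Prop :=
  Adj d n p q ∧
    ((p ∈ Km d n t ∧ q ∈ L d n (t + 1)) ∨ (q ∈ Km d n t ∧ p ∈ L d n (t + 1)) ∨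
     (p ∈ L d n t ∧ q ∈ Kp d n (t + 1)) ∨ (q ∈ L d n t ∧ p ∈ Kp d n (t + 1)) ∨
     (p ∈ L d n t ∧ q ∈ L d n (t + 1)) ∨ (q ∈ L d n t ∧ p ∈ L d n (t + 1)))

/-- The edge vector `J_p^u ∈ ℝ^{E_t}`, `J_p^u(pq) = u_p - u_q` on edges of `E_t`
incident to `p`, and `0` otherwise (as a symmetric function of edge endpoints). -/
def Jvec (d n : ℕ) (t : ℤ) (u : V d → ℝ) (p : V d) : V d → V d → ℝ := fun a b =>
  if EdgeT d n t a b then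
    (if a = p then u a - u b else if b = p then u b - u a else 0)
  else 0

/-- Inner product of edge functions. -/
def dotE (d n : ℕ) (f g : V d → V d → ℝ) : ℝ :=
  ∑ p ∈ box d n, ∑ q ∈ box d n, f p q * g p q

section Lattice

variable {d n : ℕ}

lemma sum1_add (x y : V d) : sum1 (x + y) = sum1 x + sum1 y := Finset.sum_add_distrib ..

lemma sum1_sub (x y : V d) : sum1 (x - y) = sum1 x - sum1 y := Finset.sum_sub_distrib ..

@[simp] lemma sum1_single (i : Fin d) : sum1 (Pi.single i (1 : ℤ)) = 1 := by
  simp [sum1]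

lemma sum1_nonneg_of_mem_Dset {x : V d} (hx : x ∈ Dset d n) : 0 ≤ sum1 x :=
  Finset.sum_nonneg fun j _ => by linarith [(hx j).1]

lemma dist1_comm (p q : V d) : dist1 p q = dist1 q p := by
  simp only [dist1, abs_sub_comm]

lemma abs_sub_le_dist1 (p q : V d) (j : Fin d) : |p j - q j| ≤ dist1 p q :=
  Finset.single_le_sum (f := fun j => |p j - q j|) (fun _ _ => abs_nonneg _) (mem_univ j)

lemma dist1_sub_single (p : V d) (i : Fin d) : dist1 p (p - Pi.single i 1) = 1 := by
  simp [dist1, Pi.single_apply, apply_ite]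

lemma exists_eq_add_or_sub_single_of_dist1_eq_one {p q : V d} (h : dist1 p q = 1) :
    ∃ i, q = p + Pi.single i 1 ∨ q = p - Pi.single i 1 := by
  obtain ⟨i, hi⟩ : ∃ i, p i ≠ q i := by
    by_contra! hpq
    simp [dist1, hpq] at h
  have hnonneg : ∀ j ∈ univ.erase i, 0 ≤ |p j - q j| := fun _ _ => abs_nonneg _
  have hsplit := Finset.add_sum_erase univ (fun j => |p j - q j|) (mem_univ i)
  have hi1 : 1 ≤ |p i - q i| := Int.one_le_abs (sub_ne_zero.mpr hi)
  have hrest : ∑ j ∈ univ.erase i, |p j - q j| = 0 := by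
    have := Finset.sum_nonneg hnonneg
    simp only [dist1] at h
    omega
  have hoff : ∀ j ≠ i, q j = p j := fun j hj => by
    have := (Finset.sum_eq_zero_iff_of_nonneg hnonneg).1 hrest j (mem_erase.2 ⟨hj, mem_univ j⟩)
    rw [abs_eq_zero, sub_eq_zero] at this
    exact this.symm
  have hii : |p i - q i| = 1 := by simp only [dist1] at h; omega
  have hq : q = p + Pi.single i (q i - p i) := funext fun j => by
    by_cases hj : j = i
    · subst hj
      simp
    · simp [hj, hoff j hj]
  refine ⟨i, ?_⟩
  rcases (abs_eq zero_le_one).mp hii with h' | h'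
  · right
    rw [hq, show q i - p i = -1 by linarith, Pi.single_neg, ← sub_eq_add_neg]
  · left
    rw [hq, show q i - p i = 1 by linarith]

lemma mem_box_of_mem_Vset {p : V d} (hp : p ∈ Vset d n) : p ∈ box d n := by
  simp only [box, Fintype.mem_piFinset, Finset.mem_Icc]
  intro j
  rcases hp with hD | ⟨-, q, hq, hpq⟩
  · have := hD j
    omega
  · have := abs_sub_le_dist1 p q j
    have := hq j
    rw [hpq, abs_le] at *
    omega

lemma adj_comm {p q : V d} : Adj d n p q ↔ Adj d n q p := by
  simp only [Adj, dist1_comm p q, or_comm (a := p ∈ Dset d n)]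
  tauto

lemma Adj.symm {p q : V d} (h : Adj d n p q) : Adj d n q p := adj_comm.mp h

lemma Adj.mem_box {p q : V d} (h : Adj d n p q) : p ∈ box d n := mem_box_of_mem_Vset h.2.1

lemma mem_nbr {p q : V d} : q ∈ nbr d n p ↔ Adj d n p q := by
  simp only [nbr, mem_filter, and_iff_right_iff_imp]
  exact fun h => h.symm.mem_box

lemma Adj.exists_eq_add_or_sub_single {p q : V d} (h : Adj d n p q) :
    ∃ i, q = p + Pi.single i 1 ∨ q = p - Pi.single i 1 :=
  exists_eq_add_or_sub_single_of_dist1_eq_one h.1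

lemma Adj.sum1_eq {p q : V d} (h : Adj d n p q) : sum1 q = sum1 p + 1 ∨ sum1 q = sum1 p - 1 := by
  obtain ⟨i, rfl | rfl⟩ := h.exists_eq_add_or_sub_single <;> simp [sum1_add, sum1_sub]

lemma Adj.eq_add_single {b r : V d} {k : Fin d} (hbk : b k = 0) (h : Adj d n b r) :
    r = b + Pi.single k 1 := by
  have hr : r ∈ Dset d n := h.2.2.2.resolve_left fun hb => by linarith [(hb k).1]
  have hrk := (hr k).1
  obtain ⟨j, rfl | rfl⟩ := h.exists_eq_add_or_sub_single
  · by_cases hkj : k = j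
    · rw [hkj]
    · simp [hkj, hbk] at hrk
  · by_cases hkj : k = j
    · subst hkj
      simp [hbk] at hrk
    · simp [hkj, hbk] at hrk

end Lattice

section Duality

variable {d n : ℕ}

lemma rst_eq_self {S : Set (V d)} {f : V d → ℝ} (hf : ∀ q ∉ S, f q = 0) : rst S f = f :=
  funext fun q => by by_cases hq : q ∈ S <;> simp [rst, hq, hf]

lemma dot_comm (f g : V d → ℝ) : dot d n f g = dot d n g f := by
  simp only [dot, mul_comm]

lemma dot_rst (S : Set (V d)) (f g : V d → ℝ) : dot d n (rst S f) g = dot d n f (rst S g) :=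
  sum_congr rfl fun q _ => by by_cases hq : q ∈ S <;> simp [rst, hq]

lemma dot_single {x : V d} (hx : x ∈ box d n) (f : V d → ℝ) :
    dot d n f (Pi.single x 1) = f x := by
  simp [dot, Pi.single_apply, hx]

lemma lap_eq_zero_of_notMem_box (γ : V d → V d → ℝ) (u : V d → ℝ) {p : V d}
    (hp : p ∉ box d n) : lap d n γ u p = 0 :=
  sum_eq_zero fun _ hq => absurd (mem_nbr.mp hq).mem_box hp

lemma sum_nbr_swap (F : V d → V d → ℝ) :
    ∑ p ∈ box d n, ∑ q ∈ nbr d n p, F p q = ∑ p ∈ box d n, ∑ q ∈ nbr d n p, F q p := by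
  simp only [nbr, sum_filter]
  rw [sum_comm]
  simp only [adj_comm]

lemma dot_lap_comm {γ : V d → V d → ℝ} (hγ : ∀ p q, γ p q = γ q p) (f g : V d → ℝ) :
    dot d n f (lap d n γ g) = dot d n (lap d n γ f) g := by
  have hswap := sum_nbr_swap (n := n) fun p q => f p * γ q p * g q
  simp only [dot, lap, mul_sum, sum_mul, mul_sub, sub_mul, sum_sub_distrib]
  congr 1
  · simp only [← mul_assoc, hswap]
    exact sum_congr rfl fun p _ => sum_congr rfl fun q _ => by rw [hγ]; ring
  · simp only [mul_comm, mul_left_comm]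

lemma _root_.LinearMap.apply_eq_sum_mul_single {α R : Type*} [CommSemiring R] [DecidableEq α]
    (G : (α → R) →ₗ[R] R) (s : Finset α) {f : α → R} (hf : ∀ a ∉ s, f a = 0) :
    G f = ∑ a ∈ s, f a * G (Pi.single a 1) := by
  have hsum : f = ∑ a ∈ s, f a • Pi.single a 1 := funext fun x => by
    by_cases hx : x ∈ s <;> simp [Finset.sum_apply, Pi.single_apply, hx, hf]
  conv_lhs => rw [hsum]
  simp [map_sum, map_smul]

def lapLinearMap (d n : ℕ) (γ : V d → V d → ℝ) : (V d → ℝ) →ₗ[ℝ] (V d → ℝ) where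
  toFun := lap d n γ
  map_add' u v := funext fun p => by
    simp only [lap, Pi.add_apply, ← sum_add_distrib]
    exact sum_congr rfl fun _ _ => by ring
  map_smul' c u := funext fun p => by
    simp only [lap, Pi.smul_apply, smul_eq_mul, RingHom.id_apply, mul_sum]
    exact sum_congr rfl fun _ _ => by ring

def rstLinearMap (S : Set (V d)) : (V d → ℝ) →ₗ[ℝ] (V d → ℝ) where
  toFun := rst S
  map_add' f g := funext fun q => by by_cases hq : q ∈ S <;> simp [rst, hq]
  map_smul' c f := funext fun q => by by_cases hq : q ∈ S <;> simp [rst, hq]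

def dotLinearMap (d n : ℕ) (w : V d → ℝ) : Module.Dual ℝ (V d → ℝ) where
  toFun := dot d n w
  map_add' u v := by simp only [dot, Pi.add_apply, mul_add, sum_add_distrib]
  map_smul' c u := by
    simp only [dot, Pi.smul_apply, smul_eq_mul, RingHom.id_apply, mul_sum, mul_left_comm]

theorem exists_lap_eq_of_forall_dot_eq_zero {γ : V d → V d → ℝ} (hγ : ∀ p q, γ p q = γ q p)
    (C R : Set (V d)) {w : V d → ℝ}
    (hw : ∀ v, rst R (lap d n γ (rst C v)) = 0 → dot d n w v = 0) :
    ∃ Λ : V d → ℝ, (∀ r ∉ R, Λ r = 0) ∧ ∀ x ∈ C, x ∈ box d n → w x = lap d n γ Λ x := by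
  set T := rstLinearMap R ∘ₗ lapLinearMap d n γ ∘ₗ rstLinearMap C
  obtain ⟨G, hG⟩ : dotLinearMap d n w ∈ LinearMap.range T.dualMap := by
    rw [LinearMap.range_dualMap_eq_dualAnnihilator_ker, Submodule.mem_dualAnnihilator]
    exact fun v hv => hw v hv
  set Λ := rst R fun r => G (Pi.single r 1)
  refine ⟨Λ, fun r hr => if_neg hr, fun x hxC hx => ?_⟩
  have key : ∀ v, dot d n w v = dot d n v (rst C (lap d n γ Λ)) := fun v => calc
    dot d n w v = G (T v) := (LinearMap.congr_fun hG v).symm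
    _ = dot d n (T v) fun r => G (Pi.single r 1) :=
      G.apply_eq_sum_mul_single (box d n) fun r hr => by
        simp [T, rstLinearMap, lapLinearMap, rst, lap_eq_zero_of_notMem_box γ _ hr]
    _ = dot d n (lap d n γ (rst C v)) Λ := dot_rst ..
    _ = dot d n (rst C v) (lap d n γ Λ) := (dot_lap_comm hγ ..).symm
    _ = dot d n v (rst C (lap d n γ Λ)) := dot_rst ..
  simpa [dot_comm _ (rst C _), dot_single hx, rst, hxC] using key (Pi.single x 1)

end Duality

section Localized

variable {d n : ℕ} {t : ℤ}

lemma sum1_le_of_mem_LS_union_KSm {x : V d} (hx : x ∈ LS d n t ∪ KSm d n t) : sum1 x ≤ t := by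
  rcases hx with h | h
  exacts [h.2, h.2.1]

lemma LS_union_KSm_subset_Vset : LS d n t ∪ KSm d n t ⊆ Vset d n :=
  Set.union_subset_union (fun _ h => h.1) fun _ h => h.1

/-- The cut-off of `v` is harmonic above level `t + 1` because it vanishes on every vertex of
level `> t`. -/
lemma rst_mem_Uset {γ : V d → V d → ℝ} {v : V d → ℝ}
    (hv : rst (LS d n (t + 1)) (lap d n γ (rst (LS d n t ∪ KSm d n t) v)) = 0) :
    rst (LS d n t ∪ KSm d n t) v ∈ Uset d n γ t := by
  set C := LS d n t ∪ KSm d n t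
  have hCJ : C ⊆ LS d n t ∪ JS d n t := Set.union_subset_union_right _ Set.subset_union_left
  have hvanish : ∀ p, t < sum1 p → rst C v p = 0 := fun p hp =>
    if_neg fun hpC => (sum1_le_of_mem_LS_union_KSm hpC).not_gt hp
  refine ⟨fun p hp => if_neg fun hpC => hp (hCJ hpC), rst (KSm d n t) v, rst C v,
    fun p hp => if_neg fun h => hp (Or.inl h), ⟨?_, ?_, ?_⟩, ?_, fun _ _ => rfl⟩
  · exact fun p hp => if_neg fun hpC => hp (LS_union_KSm_subset_Vset hpC)
  · intro p hpD
    by_cases hp : sum1 p ≤ t + 1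
    · simpa [rst, LS, hpD, hp] using congrFun hv p
    · refine sum_eq_zero fun q hq => ?_
      have := (mem_nbr.mp hq).sum1_eq
      rw [hvanish q (by omega), hvanish p (by omega), sub_zero, mul_zero]
  · intro p hpB
    have : p ∉ LS d n t := fun h => hpB.1 h.1
    simp [rst, C, this]
  · exact fun p hp => hvanish p (by rw [hp.2]; omega)

end Localized

section UniqueContinuation

variable {d n : ℕ} {t : ℤ} {γ : V d → V d → ℝ} {Λ : V d → ℝ} {p₀ : V d}

lemma lap_eq_mul_of_forall_ne {q x : V d} (hqx : Adj d n q x) (hq : Λ q = 0)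
    (hrest : ∀ r, Adj d n q r → r ≠ x → Λ r = 0) : lap d n γ Λ q = γ x q * Λ x := by
  rw [lap, sum_eq_single_of_mem x (mem_nbr.mpr hqx) fun r hr hrx => by
    rw [hrest r (mem_nbr.mp hr) hrx, hq, sub_zero, mul_zero], hq, sub_zero]

lemma eq_zero_of_lap_eq_zero_of_forall_ne (hγ : ∀ p q, Adj d n p q → 0 < γ p q) {q x : V d}
    (hqx : Adj d n q x) (hq : Λ q = 0) (hrest : ∀ r, Adj d n q r → r ≠ x → Λ r = 0)
    (hlap : lap d n γ Λ q = 0) : Λ x = 0 := by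
  rw [lap_eq_mul_of_forall_ne hqx hq hrest] at hlap
  exact (mul_eq_zero.mp hlap).resolve_left (hγ x q hqx.symm).ne'

lemma sub_single_ne_sub_single {x : V d} {i : Fin d} (hi : x i < p₀ i) (j : Fin d) :
    x - Pi.single i 1 ≠ p₀ - Pi.single j 1 := by
  intro h
  have := congrFun h i
  rw [Pi.sub_apply, Pi.sub_apply, Pi.single_eq_same, Pi.single_apply] at this
  split_ifs at this <;> omega

/-- A vertex of `L_{t+1}^S` next to the face `x_k = 0` is the only neighbour of the boundary
vertex `x - e_k ∈ K_t^{S-}`. -/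
lemma eq_zero_of_apply_eq_one (hγ : ∀ p q, Adj d n p q → 0 < γ p q) (hp₀ : p₀ ∈ Dset d n)
    (hΛ : ∀ r ∉ LS d n (t + 1), Λ r = 0)
    (hlap : ∀ x ∈ LS d n t ∪ KSm d n t, (∀ i, x ≠ p₀ - Pi.single i 1) → lap d n γ Λ x = 0)
    {x : V d} (hx : x ∈ LS d n (t + 1)) (hne : x ≠ p₀) {k : Fin d} (hk : x k = 1) :
    Λ x = 0 := by
  set b := x - Pi.single k 1
  have hbk : b k = 0 := by simp [b, hk]
  have hbD : b ∉ Dset d n := fun h => by linarith [(h k).1]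
  have hdist : dist1 b x = 1 := by rw [dist1_comm]; exact dist1_sub_single x k
  have hbB : b ∈ Bset d n := ⟨hbD, x, hx.1, hdist⟩
  have hbx : Adj d n b x := ⟨hdist, Or.inr hbB, Or.inl hx.1, Or.inr hx.1⟩
  have hbKSm : b ∈ KSm d n t :=
    ⟨hbB, by simp only [b, sum1_sub, sum1_single]; linarith [hx.2], k, hbk⟩
  refine eq_zero_of_lap_eq_zero_of_forall_ne hγ hbx (hΛ b fun h => hbD h.1)
    (fun r hbr hrx => absurd (hbr.eq_add_single hbk) (by simpa [b] using hrx))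
    (hlap b (Or.inr hbKSm) fun i hi => ?_)
  obtain rfl | hik := eq_or_ne i k
  · exact hne (by simpa [b] using hi)
  · have := congrFun hi k
    rw [hbk, Pi.sub_apply, Pi.single_eq_of_ne hik.symm, sub_zero] at this
    linarith [(hp₀ k).1]

/-- The order in which `Λ` is shown to vanish: level by level, and within a level
lexicographically in `x ⊓ p₀`. -/
def sweepRank (p₀ x : V d) : ℕ ×ₗ Lex (Fin d → ℕ) :=
  toLex ((sum1 x).toNat, toLex fun k => (min (x k) (p₀ k)).toNat)

lemma sweepRank_lt_of_sum1_lt {x r : V d} (hr : 0 ≤ sum1 r) (h : sum1 r < sum1 x) :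
    sweepRank p₀ r < sweepRank p₀ x :=
  Prod.Lex.toLex_lt_toLex.mpr (Or.inl (by omega))

lemma sweepRank_sub_add_single_lt {x : V d} {i j : Fin d} (hji : j ≠ i) (hx : 1 ≤ x i)
    (hi : x i < p₀ i) (hmin : ∀ k < i, p₀ k ≤ x k) :
    sweepRank p₀ (x - Pi.single i 1 + Pi.single j 1) < sweepRank p₀ x := by
  refine Prod.Lex.toLex_lt_toLex.mpr (Or.inr ⟨by simp [sum1_add, sum1_sub], i, fun k hk => ?_, ?_⟩)
  · have := hmin k hk
    simp only [Pi.toLex_apply, Pi.add_apply, Pi.sub_apply, Pi.single_apply]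
    split_ifs <;> omega
  · simp only [Pi.toLex_apply, Pi.add_apply, Pi.sub_apply, Pi.single_eq_same,
      Pi.single_eq_of_ne hji.symm]
    omega

/-- With `i` the first coordinate in which `x` falls short of `p₀`, the equation at
`x - e_i` involves `x` and otherwise only vertices of lower `sweepRank`. -/
lemma eq_zero_of_forall_sweepRank_lt (hγ : ∀ p q, Adj d n p q → 0 < γ p q)
    (hp₀ : p₀ ∈ L d n (t + 1)) (hΛ : ∀ r ∉ LS d n (t + 1), Λ r = 0)
    (hlap : ∀ x ∈ LS d n t ∪ KSm d n t, (∀ i, x ≠ p₀ - Pi.single i 1) → lap d n γ Λ x = 0)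
    {x : V d} (hx : x ∈ LS d n (t + 1)) (hne : x ≠ p₀) (hx2 : ∀ k, 2 ≤ x k)
    (ih : ∀ r, sweepRank p₀ r < sweepRank p₀ x → r ≠ p₀ → Λ r = 0) : Λ x = 0 := by
  obtain ⟨i, hi, hmin⟩ : ∃ i, x i < p₀ i ∧ ∀ k < i, p₀ k ≤ x k := by
    have hex : ∃ i, x i < p₀ i := by
      by_contra! hge
      obtain ⟨j, hj⟩ := Function.ne_iff.mp hne
      have : sum1 p₀ < sum1 x :=
        sum_lt_sum (fun i _ => hge i) ⟨j, mem_univ j, (hge j).lt_of_ne' hj⟩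
      linarith [hx.2, hp₀.2]
    obtain ⟨i, hi, hmin⟩ := wellFounded_lt.has_min {i | x i < p₀ i} hex
    exact ⟨i, hi, fun k hk => not_lt.mp fun h => hmin k h hk⟩
  set q := x - Pi.single i 1
  have hqD : q ∈ Dset d n := fun k => by
    by_cases hk : k = i
    · subst hk
      simp only [q, Pi.sub_apply, Pi.single_eq_same]
      constructor <;> linarith [hx2 k, (hx.1 k).2]
    · simpa [q, hk] using hx.1 k
  have hqsum : sum1 q = sum1 x - 1 := by simp [q, sum1_sub]
  have hqx : Adj d n q x :=
    ⟨by rw [dist1_comm]; exact dist1_sub_single x i, Or.inl hqD, Or.inl hx.1, Or.inl hqD⟩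
  refine eq_zero_of_lap_eq_zero_of_forall_ne hγ hqx
    (ih q (sweepRank_lt_of_sum1_lt (sum1_nonneg_of_mem_Dset hqD) (by omega))
      fun h => by linarith [congrArg sum1 h, hx.2, hp₀.2])
    (fun r hqr hrx => ?_) (hlap q (Or.inl ⟨hqD, by linarith [hx.2]⟩) (sub_single_ne_sub_single hi))
  by_cases hr : r ∈ LS d n (t + 1)
  swap
  · exact hΛ r hr
  obtain ⟨j, rfl | rfl⟩ := hqr.exists_eq_add_or_sub_single
  · have hji : j ≠ i := by rintro rfl; exact hrx (by simp [q])
    exact ih _ (sweepRank_sub_add_single_lt hji (by linarith [hx2 i]) hi hmin)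
      fun h => sub_single_ne_sub_single hi j (eq_sub_of_add_eq h)
  · have hrsum : sum1 (q - Pi.single j 1) = sum1 x - 2 := by rw [sum1_sub, hqsum, sum1_single]; ring
    exact ih _ (sweepRank_lt_of_sum1_lt (sum1_nonneg_of_mem_Dset hr.1) (by omega))
      fun h => by linarith [congrArg sum1 h, hx.2, hp₀.2]

theorem eq_zero_of_lap_eq_zero (hγ : ∀ p q, Adj d n p q → 0 < γ p q)
    (hp₀ : p₀ ∈ L d n (t + 1)) (hΛ : ∀ r ∉ LS d n (t + 1), Λ r = 0)
    (hlap : ∀ x ∈ LS d n t ∪ KSm d n t, (∀ i, x ≠ p₀ - Pi.single i 1) → lap d n γ Λ x = 0) :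
    ∀ x ≠ p₀, Λ x = 0 := by
  intro x
  induction x using (InvImage.wf (sweepRank p₀) wellFounded_lt).induction with
  | _ x ih =>
    intro hne
    by_cases hx : x ∈ LS d n (t + 1)
    swap
    · exact hΛ x hx
    by_cases hone : ∃ k, x k = 1
    · obtain ⟨k, hk⟩ := hone
      exact eq_zero_of_apply_eq_one hγ hp₀.1 hΛ hlap hx hne hk
    · push Not at hone
      refine eq_zero_of_forall_sweepRank_lt hγ hp₀ hΛ hlap hx hne (fun k => ?_) ih
      have := (hx.1 k).1
      have := hone k
      omega

end UniqueContinuation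

section Main

variable {d n : ℕ} {t : ℤ} {p₀ : V d}

lemma exists_eq_sub_single_of_mem (hp₀ : p₀ ∈ L d n (t + 1)) {z : V d}
    (hz : z ∈ (L d n t ∪ K d n t) ∩ {q | Adj d n p₀ q}) : ∃ i, z = p₀ - Pi.single i 1 := by
  have hzsum : sum1 z = t := by
    rcases hz.1 with h | h
    exacts [h.2, h.2]
  obtain ⟨i, rfl | rfl⟩ := hz.2.exists_eq_add_or_sub_single
  · rw [sum1_add, hp₀.2, sum1_single] at hzsum
    omega
  · exact ⟨i, rfl⟩

lemma sub_single_mem_LS_union_KSm (hp₀ : p₀ ∈ L d n (t + 1)) (i : Fin d) :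
    p₀ - Pi.single i 1 ∈ LS d n t ∪ KSm d n t := by
  have hsum : sum1 (p₀ - Pi.single i 1) = t := by simp [sum1_sub, hp₀.2]
  by_cases h : p₀ - Pi.single i 1 ∈ Dset d n
  · exact Or.inl ⟨h, hsum.le⟩
  have hpi : p₀ i = 1 := by
    refine le_antisymm (not_lt.mp fun hlt => h fun k => ?_) (hp₀.1 i).1
    by_cases hk : k = i
    · subst hk
      simp only [Pi.sub_apply, Pi.single_eq_same]
      constructor <;> linarith [(hp₀.1 k).2]
    · simpa [hk] using hp₀.1 k
  exact Or.inr ⟨⟨h, p₀, hp₀.1, by rw [dist1_comm]; exact dist1_sub_single p₀ i⟩, hsum.le, i,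
    by simp [hpi]⟩

theorem stmt15_general (d n : ℕ)
    (γ : V d → V d → ℝ) (hγ : GoodCond d n γ)
    (t : ℤ)
    (p₀ : V d) (hp₀ : p₀ ∈ L d n (t + 1))
    (w : V d → ℝ)
    (hsupp : ∀ q, q ∉ (L d n t ∪ K d n t) ∩ {q | Adj d n p₀ q} → w q = 0)
    (horth : ∀ u ∈ Uset d n γ t, dot d n w u = 0) :
    ∃ α : ℝ, w = α • rst ((L d n t ∪ K d n t) ∩ {q | Adj d n p₀ q})
      (fun q => γ p₀ q) := by
  set M := (L d n t ∪ K d n t) ∩ {q | Adj d n p₀ q}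
  set C := LS d n t ∪ KSm d n t
  have hMC : M ⊆ C := fun z hz => by
    obtain ⟨i, rfl⟩ := exists_eq_sub_single_of_mem hp₀ hz
    exact sub_single_mem_LS_union_KSm hp₀ i
  obtain ⟨Λ, hΛ, hwΛ⟩ := exists_lap_eq_of_forall_dot_eq_zero hγ.1 C (LS d n (t + 1)) fun v hv =>
    calc dot d n w v = dot d n w (rst C v) := by
          rw [← dot_rst, rst_eq_self fun q hq => hsupp q fun hqM => hq (hMC hqM)]
      _ = 0 := horth _ (rst_mem_Uset hv)
  have hΛp₀ : ∀ x ≠ p₀, Λ x = 0 := eq_zero_of_lap_eq_zero hγ.2 hp₀ hΛ fun x hxC hxM => by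
    rw [← hwΛ x hxC (mem_box_of_mem_Vset (LS_union_KSm_subset_Vset hxC))]
    exact hsupp x fun hx => Exists.elim (exists_eq_sub_single_of_mem hp₀ hx) hxM
  refine ⟨Λ p₀, funext fun z => ?_⟩
  by_cases hz : z ∈ M
  · have hzp₀ : z ≠ p₀ := by
      rintro rfl
      simpa [dist1] using hz.2.1
    rw [hwΛ z (hMC hz) hz.2.symm.mem_box,
      lap_eq_mul_of_forall_ne hz.2.symm (hΛp₀ z hzp₀) fun r _ hr => hΛp₀ r hr]
    simp [rst, hz, hγ.1 p₀ z, mul_comm]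
  · simp [rst, hz, hsupp z hz]

/-- for `p₀ ∈ L_{t+1}` and `M = (L_t ∪ K_t) ∩ N(p₀)`, any `w`
supported on `M` orthogonal to all restrictions of `𝒰^{(t)}` is a scalar multiple
of `(γ_{p₀ q})_{q ∈ M}`. -/
theorem stmt15 (d n : ℕ) (hd : 2 ≤ d) (hn : 1 ≤ n)
    (γ : V d → V d → ℝ) (hγ : GoodCond d n γ)
    (t : ℤ) (ht1 : (d : ℤ) - 1 ≤ t) (ht2 : t ≤ (d : ℤ) * n - 1)
    (p₀ : V d) (hp₀ : p₀ ∈ L d n (t + 1))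
    (w : V d → ℝ)
    (hsupp : ∀ q, q ∉ (L d n t ∪ K d n t) ∩ {q | Adj d n p₀ q} → w q = 0)
    (horth : ∀ u ∈ Uset d n γ t, dot d n w u = 0) :
    ∃ α : ℝ, w = α • rst ((L d n t ∪ K d n t) ∩ {q | Adj d n p₀ q})
      (fun q => γ p₀ q) :=
  stmt15_general d n γ hγ t p₀ hp₀ w hsupp horth

end Main

end DiscreteCalderon
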